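/- (Transient local consensus bound.) Under the spectral setup with eigenvalues λ₁ ≤ λ₂ ≤ λ₃ in (0,1), eigenvectors η = 𝟙_m/√m and ξ = (𝟙_{m/2},-𝟙_{m/2})/√m, initial vector x(0) with |x_i(0)| ≤ c_x, and forcing term r with |ηᵀ(r/λ₁)| ≤ c_x√m, |ξᵀ(r/λ₁)·(λ₁/λ₂)| contributions bounded likewise, and ‖P(r/λ₁)‖∞-type terms bounded by 2c_x, the expected state x_i(t) of agent i satisfies |x_i(t) - (2/m)Σ_{j in community of i} x_j(0)| ≤ [(4λ₁ + λ₂)t + (1-λ₃)ᵗ]·c_x for all t ∈ ℕ. -/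
import Mathlib
open Finset Matrix

theorem cardlt (m h : ℕ) (hh : h ≤ m) :
    ((univ : Finset (Fin m)).filter (fun j : Fin m => (j:ℕ) < h)).card = h := by
  rcases Nat.eq_or_lt_of_le hh with rfl | hlt
  · have : (univ : Finset (Fin h)).filter (fun j : Fin h => (j:ℕ) < h) = univ := by
      ext j; simp [j.is_lt]
    rw [this, Finset.card_univ, Fintype.card_fin]
  · have : (univ : Finset (Fin m)).filter (fun j : Fin m => (j:ℕ) < h) = Finset.Iio ⟨h, hlt⟩ := by
      ext j; simp [Fin.lt_def]
    rw [this, Fin.card_Iio]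

theorem coefid (m h : ℕ) (η ξ : Fin m → ℝ)
    (hη : ∀ i, η i = 1 / Real.sqrt m)
    (hξ : ∀ i, ξ i = if (i:ℕ) < h then 1/Real.sqrt m else -1/Real.sqrt m)
    (i j : Fin m) :
    (η j * η i + ξ j * ξ i = if (((j:ℕ) < h) ↔ ((i:ℕ) < h)) then 2/(m:ℝ) else 0)
    ∧ (η j * η i - ξ j * ξ i = if (((j:ℕ) < h) ↔ ((i:ℕ) < h)) then 0 else 2/(m:ℝ)) := by
  have hs : Real.sqrt m * Real.sqrt m = (m:ℝ) := Real.mul_self_sqrt (Nat.cast_nonneg m)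
  have hone : ((Real.sqrt m)⁻¹)^2 = ((m:ℝ))⁻¹ := by rw [sq, ← mul_inv, hs]
  rw [hη, hη, hξ, hξ]
  by_cases hj : (j:ℕ) < h <;> by_cases hi : (i:ℕ) < h <;>
    simp [hj, hi] <;> ring_nf <;> simp [hone] <;> ring_nf

theorem sumplus (m h : ℕ) (η ξ : Fin m → ℝ)
    (hη : ∀ i, η i = 1 / Real.sqrt m)
    (hξ : ∀ i, ξ i = if (i:ℕ) < h then 1/Real.sqrt m else -1/Real.sqrt m)
    (i : Fin m) (v : Fin m → ℝ) :
    (∑ j, η j * v j) * η i + (∑ j, ξ j * v j) * ξ i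
      = (2/(m:ℝ)) * ∑ j ∈ univ.filter (fun j : Fin m => (((j:ℕ) < h) ↔ ((i:ℕ) < h))), v j := by
  rw [Finset.sum_mul, Finset.sum_mul, ← Finset.sum_add_distrib, Finset.mul_sum,
    Finset.sum_filter]
  refine Finset.sum_congr rfl fun j _ => ?_
  have hc := (coefid m h η ξ hη hξ i j).1
  by_cases hj : (((j:ℕ) < h) ↔ ((i:ℕ) < h)) <;> simp [hj] at hc ⊢ <;> linear_combination v j * hc

theorem summinus (m h : ℕ) (η ξ : Fin m → ℝ)
    (hη : ∀ i, η i = 1 / Real.sqrt m)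
    (hξ : ∀ i, ξ i = if (i:ℕ) < h then 1/Real.sqrt m else -1/Real.sqrt m)
    (i : Fin m) (v : Fin m → ℝ) :
    (∑ j, η j * v j) * η i - (∑ j, ξ j * v j) * ξ i
      = (2/(m:ℝ)) * ∑ j ∈ univ.filter (fun j : Fin m => ¬(((j:ℕ) < h) ↔ ((i:ℕ) < h))), v j := by
  rw [Finset.sum_mul, Finset.sum_mul, ← Finset.sum_sub_distrib, Finset.mul_sum,
    Finset.sum_filter]
  refine Finset.sum_congr rfl fun j _ => ?_
  have hc := (coefid m h η ξ hη hξ i j).2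
  by_cases hj : (((j:ℕ) < h) ↔ ((i:ℕ) < h)) <;> simp [hj] at hc ⊢ <;> linear_combination v j * hc

theorem orth (m h : ℕ) (hm : m = h + h) (hm0 : 0 < m) (η ξ : Fin m → ℝ)
    (hη : ∀ i, η i = 1 / Real.sqrt m)
    (hξ : ∀ i, ξ i = if (i:ℕ) < h then 1/Real.sqrt m else -1/Real.sqrt m) :
    (∑ j, η j * η j) = 1 ∧ (∑ j, ξ j * ξ j) = 1 ∧ (∑ j, η j * ξ j) = 0 := by
  have hs : Real.sqrt m * Real.sqrt m = (m:ℝ) := Real.mul_self_sqrt (Nat.cast_nonneg m)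
  have hmne : (m:ℝ) ≠ 0 := by positivity
  have hone : (1:ℝ) / Real.sqrt m * (1 / Real.sqrt m) = 1 / m := by
    rw [div_mul_div_comm, one_mul, hs]
  have hcard1 : ((univ : Finset (Fin m)).filter (fun j : Fin m => (j:ℕ) < h)).card = h :=
    cardlt m h (by omega)
  have hcard2 : ((univ : Finset (Fin m)).filter (fun j : Fin m => ¬((j:ℕ) < h))).card = h := by
    have := Finset.card_filter_add_card_filter_not (s := (univ : Finset (Fin m)))
      (p := fun j : Fin m => (j:ℕ) < h)
    simp only [not_lt, Finset.card_univ, Fintype.card_fin] at this ⊢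
    omega
  refine ⟨?_, ?_, ?_⟩
  · rw [Finset.sum_congr rfl fun j _ => by rw [hη, hone]]
    rw [Finset.sum_const, Finset.card_univ, Fintype.card_fin, nsmul_eq_mul]
    field_simp
  · rw [Finset.sum_congr rfl fun j _ => show ξ j * ξ j = 1 / m by
      rw [hξ]; by_cases hj : (j:ℕ) < h <;> simp [hj] <;> ring_nf <;>
        rw [sq, ← mul_inv, hs]]
    rw [Finset.sum_const, Finset.card_univ, Fintype.card_fin, nsmul_eq_mul]
    field_simp
  · rw [Finset.sum_congr rfl fun j _ => show η j * ξ j =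
      (if (j:ℕ) < h then (1:ℝ)/m else -(1/m)) by
      rw [hη, hξ]; by_cases hj : (j:ℕ) < h <;> simp [hj, hone] <;> ring_nf <;>
        rw [sq, ← mul_inv, hs] <;> ring_nf]
    rw [Finset.sum_ite, Finset.sum_const, Finset.sum_const, hcard1, hcard2]
    simp

theorem vmv {m : ℕ} (u v w : Fin m → ℝ) (i : Fin m) :
    (Matrix.vecMulVec u v).mulVec w i = (∑ j, v j * w j) * u i := by
  simp only [Matrix.mulVec, Matrix.vecMulVec_apply, dotProduct, Finset.sum_mul]
  exact Finset.sum_congr rfl fun j _ => by ring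

theorem Pw {m : ℕ} (η ξ : Fin m → ℝ) (P : Matrix (Fin m) (Fin m) ℝ)
    (hP : P = 1 - Matrix.vecMulVec η η - Matrix.vecMulVec ξ ξ) (w : Fin m → ℝ) (i : Fin m) :
    P.mulVec w i = w i - (∑ j, η j * w j) * η i - (∑ j, ξ j * w j) * ξ i := by
  rw [hP, Matrix.sub_mulVec, Matrix.sub_mulVec, Matrix.one_mulVec]
  simp [vmv]

theorem Qw {m : ℕ} (l1 l2 l3 : ℝ) (η ξ : Fin m → ℝ) (P Q : Matrix (Fin m) (Fin m) ℝ)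
    (hP : P = 1 - Matrix.vecMulVec η η - Matrix.vecMulVec ξ ξ)
    (hQ : Q = (1 - l1) • Matrix.vecMulVec η η + (1 - l2) • Matrix.vecMulVec ξ ξ + (1 - l3) • P)
    (w : Fin m → ℝ) (i : Fin m) :
    Q.mulVec w i = (1-l1) * ((∑ j, η j * w j) * η i) + (1-l2) * ((∑ j, ξ j * w j) * ξ i)
      + (1-l3) * (w i - (∑ j, η j * w j) * η i - (∑ j, ξ j * w j) * ξ i) := by
  rw [hQ, Matrix.add_mulVec, Matrix.add_mulVec, Matrix.smul_mulVec,
    Matrix.smul_mulVec, Matrix.smul_mulVec]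
  simp [vmv, Pw η ξ P hP w i]

set_option maxHeartbeats 2000000 in
theorem stmt5 (m : ℕ) (hm : Even m) (hm0 : 0 < m) (cx : ℝ) (hcx : 0 < cx)
    (l1 l2 l3 : ℝ) (h01 : 0 < l1) (h12 : l1 ≤ l2) (h23 : l2 ≤ l3) (h31 : l3 < 1)
    (η ξ : Fin m → ℝ)
    (hη : ∀ i, η i = 1 / Real.sqrt m)
    (hξ : ∀ i, ξ i = if (i:ℕ) < m/2 then 1/Real.sqrt m else -1/Real.sqrt m)
    (P Q : Matrix (Fin m) (Fin m) ℝ)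
    (hP : P = 1 - Matrix.vecMulVec η η - Matrix.vecMulVec ξ ξ)
    (hQ : Q = (1 - l1) • Matrix.vecMulVec η η + (1 - l2) • Matrix.vecMulVec ξ ξ + (1 - l3) • P)
    (r : Fin m → ℝ)
    (hr1 : ∀ i, |(∑ j, η j * r j) * η i| ≤ l1 * cx)
    (hr2 : ∀ i, |(∑ j, ξ j * r j) * ξ i| ≤ l1 * cx)
    (hr3 : ∀ i, |P.mulVec r i| ≤ 2 * l1 * cx)
    (x : ℕ → Fin m → ℝ)
    (hx0 : ∀ i, |x 0 i| ≤ cx)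
    (hx0η : ∀ i, |(∑ j, η j * x 0 j) * η i| ≤ cx)
    (hx0ξ : ∀ i, |(∑ j, ξ j * x 0 j) * ξ i| ≤ cx)
    (hx0P : ∀ i, |P.mulVec (x 0) i| ≤ cx)
    (hx : ∀ t, x (t+1) = Q.mulVec (x t) + r) :
    ∀ (t : ℕ) (i : Fin m),
      |x t i - (2 / m) * ∑ j ∈ Finset.univ.filter
          (fun j : Fin m => (((j:ℕ) < m/2) ↔ ((i:ℕ) < m/2))), x 0 j|
        ≤ ((4*l1 + l2) * t + (1 - l3)^t) * cx := by
  intro t i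
  obtain ⟨k, hk⟩ := hm
  have hmk : m = m/2 + m/2 := by omega
  have hkm : m/2 = k := by omega
  obtain ⟨o1, o2, o3⟩ := orth m (m/2) hmk hm0 η ξ hη hξ
  -- recursions for the η- and ξ- components
  have hrecA : ∀ s, (∑ j, η j * x (s+1) j)
      = (1-l1) * (∑ j, η j * x s j) + (∑ j, η j * r j) := by
    intro s
    rw [hx s]
    rw [Finset.sum_congr rfl fun j (_ : j ∈ univ) =>
      show η j * (Q.mulVec (x s) + r) j = η j * Q.mulVec (x s) j + η j * r j by
        simp [Pi.add_apply]; ring]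
    rw [Finset.sum_add_distrib]
    congr 1
    rw [Finset.sum_congr rfl fun j (_ : j ∈ univ) =>
      show η j * Q.mulVec (x s) j
        = ((1-l1) * (∑ p, η p * x s p) - (1-l3) * (∑ p, η p * x s p)) * (η j * η j)
        + ((1-l2) * (∑ p, ξ p * x s p) - (1-l3) * (∑ p, ξ p * x s p)) * (η j * ξ j)
        + (1-l3) * (η j * x s j) by
        rw [Qw l1 l2 l3 η ξ P Q hP hQ (x s) j]; ring]
    rw [Finset.sum_add_distrib, Finset.sum_add_distrib, ← Finset.mul_sum, ← Finset.mul_sum,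
      ← Finset.mul_sum, o1, o3]
    ring
  have hrecB : ∀ s, (∑ j, ξ j * x (s+1) j)
      = (1-l2) * (∑ j, ξ j * x s j) + (∑ j, ξ j * r j) := by
    intro s
    rw [hx s]
    rw [Finset.sum_congr rfl fun j (_ : j ∈ univ) =>
      show ξ j * (Q.mulVec (x s) + r) j = ξ j * Q.mulVec (x s) j + ξ j * r j by
        simp [Pi.add_apply]; ring]
    rw [Finset.sum_add_distrib]
    congr 1
    rw [Finset.sum_congr rfl fun j (_ : j ∈ univ) =>
      show ξ j * Q.mulVec (x s) j
        = ((1-l1) * (∑ p, η p * x s p) - (1-l3) * (∑ p, η p * x s p)) * (η j * ξ j)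
        + ((1-l2) * (∑ p, ξ p * x s p) - (1-l3) * (∑ p, ξ p * x s p)) * (ξ j * ξ j)
        + (1-l3) * (ξ j * x s j) by
        rw [Qw l1 l2 l3 η ξ P Q hP hQ (x s) j]; ring]
    rw [Finset.sum_add_distrib, Finset.sum_add_distrib, ← Finset.mul_sum, ← Finset.mul_sum,
      ← Finset.mul_sum, o2, o3]
    ring
  -- abbreviations
  set u := (∑ j, η j * x 0 j) * η i with hu
  set v := (∑ j, ξ j * x 0 j) * ξ i with hv
  -- the key joint bound |u| + |v| ≤ cx
  have hcard1 : ((univ : Finset (Fin m)).filter (fun j : Fin m => (j:ℕ) < m/2)).card = m/2 :=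
    cardlt m (m/2) (by omega)
  have hcard2 : ((univ : Finset (Fin m)).filter (fun j : Fin m => ¬((j:ℕ) < m/2))).card = m/2 := by
    have := Finset.card_filter_add_card_filter_not (s := (univ : Finset (Fin m)))
      (p := fun j : Fin m => (j:ℕ) < m/2)
    simp only [not_lt, Finset.card_univ, Fintype.card_fin] at this ⊢
    omega
  have hSbound : ∀ S : Finset (Fin m), S.card = m/2 → |(2/(m:ℝ)) * ∑ j ∈ S, x 0 j| ≤ cx := by
    intro S hS
    have h1 : |∑ j ∈ S, x 0 j| ≤ (m/2 : ℕ) * cx := by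
      calc |∑ j ∈ S, x 0 j| ≤ ∑ j ∈ S, |x 0 j| := Finset.abs_sum_le_sum_abs _ _
        _ ≤ S.card • cx := Finset.sum_le_card_nsmul _ _ _ fun j _ => hx0 j
        _ = (m/2 : ℕ) * cx := by rw [hS, nsmul_eq_mul]
    have hm2 : ((m:ℝ)) = 2 * ((m/2 : ℕ) : ℝ) := by
      rw [hkm]; push_cast [hk]; ring
    rw [abs_mul]
    have h2 : |2/(m:ℝ)| = 2/(m:ℝ) := abs_of_pos (by positivity)
    rw [h2, div_mul_eq_mul_div, div_le_iff₀ (by positivity : (0:ℝ) < (m:ℝ))]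
    nlinarith [h1, hcx.le]
  have hfilterp : (univ : Finset (Fin m)).filter
      (fun j : Fin m => (((j:ℕ) < m/2) ↔ ((i:ℕ) < m/2))) =
      (if (i:ℕ) < m/2 then (univ : Finset (Fin m)).filter (fun j : Fin m => (j:ℕ) < m/2)
        else (univ : Finset (Fin m)).filter (fun j : Fin m => ¬((j:ℕ) < m/2))) := by
    by_cases hi : (i:ℕ) < m/2 <;> simp only [hi, if_pos, if_neg, not_false_iff] <;>
      · ext j; simp [hi]
  have hcardp : ((univ : Finset (Fin m)).filter
      (fun j : Fin m => (((j:ℕ) < m/2) ↔ ((i:ℕ) < m/2)))).card = m/2 := by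
    rw [hfilterp]
    by_cases hi : (i:ℕ) < m/2
    · rw [if_pos hi]; exact hcard1
    · rw [if_neg hi]; exact hcard2
  have hfiltern : (univ : Finset (Fin m)).filter
      (fun j : Fin m => ¬(((j:ℕ) < m/2) ↔ ((i:ℕ) < m/2))) =
      (if (i:ℕ) < m/2 then (univ : Finset (Fin m)).filter (fun j : Fin m => ¬((j:ℕ) < m/2))
        else (univ : Finset (Fin m)).filter (fun j : Fin m => (j:ℕ) < m/2)) := by
    by_cases hi : (i:ℕ) < m/2 <;> simp only [hi, if_pos, if_neg, not_false_iff] <;>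
      · ext j; simp [hi]
  have hcardn : ((univ : Finset (Fin m)).filter
      (fun j : Fin m => ¬(((j:ℕ) < m/2) ↔ ((i:ℕ) < m/2)))).card = m/2 := by
    rw [hfiltern]
    by_cases hi : (i:ℕ) < m/2
    · rw [if_pos hi]; exact hcard2
    · rw [if_neg hi]; exact hcard1
  have hplus : u + v = (2/(m:ℝ)) * ∑ j ∈ univ.filter
      (fun j : Fin m => (((j:ℕ) < m/2) ↔ ((i:ℕ) < m/2))), x 0 j :=
    sumplus m (m/2) η ξ hη hξ i (x 0)
  have hminus : u - v = (2/(m:ℝ)) * ∑ j ∈ univ.filter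
      (fun j : Fin m => ¬(((j:ℕ) < m/2) ↔ ((i:ℕ) < m/2))), x 0 j :=
    summinus m (m/2) η ξ hη hξ i (x 0)
  have hbp : |u + v| ≤ cx := by rw [hplus]; exact hSbound _ hcardp
  have hbn : |u - v| ≤ cx := by rw [hminus]; exact hSbound _ hcardn
  have hkey : |u| + |v| ≤ cx := by
    rcases abs_cases u with ⟨hu1, _⟩ | ⟨hu1, _⟩ <;> rcases abs_cases v with ⟨hv1, _⟩ | ⟨hv1, _⟩ <;>
      rcases abs_le.mp hbp with ⟨hp1, hp2⟩ <;> rcases abs_le.mp hbn with ⟨hn1, hn2⟩ <;> linarith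
  -- induction bounds
  have I1 : ∀ s : ℕ, |(∑ j, η j * x s j) * η i - u| ≤ s * (l1 * |u| + l1 * cx) := by
    intro s
    induction s with
    | zero => simp [hu]
    | succ s ih =>
      have e : (∑ j, η j * x (s+1) j) * η i - u
          = (1-l1) * ((∑ j, η j * x s j) * η i - u) + (-(l1 * u)) + (∑ j, η j * r j) * η i := by
        rw [hrecA s]; ring
      rw [e]
      have habs := abs_add_three ((1-l1) * ((∑ j, η j * x s j) * η i - u)) (-(l1 * u))
        ((∑ j, η j * r j) * η i)
      have h1 : |(1-l1) * ((∑ j, η j * x s j) * η i - u)|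
          = (1-l1) * |(∑ j, η j * x s j) * η i - u| := by
        rw [abs_mul, abs_of_nonneg (by linarith : (0:ℝ) ≤ 1 - l1)]
      have h2 : |-(l1 * u)| = l1 * |u| := by
        rw [abs_neg, abs_mul, abs_of_pos h01]
      have h3 := hr1 i
      have hs0 : (0:ℝ) ≤ s := Nat.cast_nonneg s
      have hgoal : ((s:ℝ)+1) * (l1 * |u| + l1 * cx) = ((s+1 : ℕ) : ℝ) * (l1 * |u| + l1 * cx) := by
        push_cast; ring
      rw [← hgoal]
      rw [h1, h2] at habs
      have hx1 : (1-l1) * |(∑ j, η j * x s j) * η i - u|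
          ≤ 1 * ((s:ℝ) * (l1 * |u| + l1 * cx)) :=
        mul_le_mul (by linarith) ih (abs_nonneg _) zero_le_one
      rw [one_mul] at hx1
      linarith [habs, hx1, h3]
  have I2 : ∀ s : ℕ, |(∑ j, ξ j * x s j) * ξ i - v| ≤ s * (l2 * |v| + l1 * cx) := by
    intro s
    induction s with
    | zero => simp [hv]
    | succ s ih =>
      have e : (∑ j, ξ j * x (s+1) j) * ξ i - v
          = (1-l2) * ((∑ j, ξ j * x s j) * ξ i - v) + (-(l2 * v)) + (∑ j, ξ j * r j) * ξ i := by
        rw [hrecB s]; ring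
      rw [e]
      have habs := abs_add_three ((1-l2) * ((∑ j, ξ j * x s j) * ξ i - v)) (-(l2 * v))
        ((∑ j, ξ j * r j) * ξ i)
      have h1 : |(1-l2) * ((∑ j, ξ j * x s j) * ξ i - v)|
          = (1-l2) * |(∑ j, ξ j * x s j) * ξ i - v| := by
        rw [abs_mul, abs_of_nonneg (by linarith : (0:ℝ) ≤ 1 - l2)]
      have h2 : |-(l2 * v)| = l2 * |v| := by
        rw [abs_neg, abs_mul, abs_of_pos (by linarith : (0:ℝ) < l2)]
      have h3 := hr2 i
      have hs0 : (0:ℝ) ≤ s := Nat.cast_nonneg s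
      have hgoal : ((s:ℝ)+1) * (l2 * |v| + l1 * cx) = ((s+1 : ℕ) : ℝ) * (l2 * |v| + l1 * cx) := by
        push_cast; ring
      rw [← hgoal]
      rw [h1, h2] at habs
      have hx1 : (1-l2) * |(∑ j, ξ j * x s j) * ξ i - v|
          ≤ 1 * ((s:ℝ) * (l2 * |v| + l1 * cx)) :=
        mul_le_mul (by linarith) ih (abs_nonneg _) zero_le_one
      rw [one_mul] at hx1
      linarith [habs, hx1, h3]
  -- bound on the residual component
  have hrecZ : ∀ s : ℕ,
      x (s+1) i - (∑ j, η j * x (s+1) j) * η i - (∑ j, ξ j * x (s+1) j) * ξ i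
      = (1-l3) * (x s i - (∑ j, η j * x s j) * η i - (∑ j, ξ j * x s j) * ξ i)
        + P.mulVec r i := by
    intro s
    have hx1 : x (s+1) i = Q.mulVec (x s) i + r i := by rw [hx s]; rfl
    rw [hx1, hrecA s, hrecB s, Qw l1 l2 l3 η ξ P Q hP hQ (x s) i,
      Pw η ξ P hP r i]
    ring
  have I3 : ∀ s : ℕ, |x s i - (∑ j, η j * x s j) * η i - (∑ j, ξ j * x s j) * ξ i|
      ≤ (1-l3)^s * cx + s * (2 * l1 * cx) := by
    intro s
    induction s with
    | zero =>
      have : x 0 i - (∑ j, η j * x 0 j) * η i - (∑ j, ξ j * x 0 j) * ξ i = P.mulVec (x 0) i :=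
        (Pw η ξ P hP (x 0) i).symm
      rw [this]; simpa using hx0P i
    | succ s ih =>
      rw [hrecZ s]
      have habs := abs_add_le ((1-l3) * (x s i - (∑ j, η j * x s j) * η i
        - (∑ j, ξ j * x s j) * ξ i)) (P.mulVec r i)
      have h1 : |(1-l3) * (x s i - (∑ j, η j * x s j) * η i - (∑ j, ξ j * x s j) * ξ i)|
          = (1-l3) * |x s i - (∑ j, η j * x s j) * η i - (∑ j, ξ j * x s j) * ξ i| := by
        rw [abs_mul, abs_of_nonneg (by linarith : (0:ℝ) ≤ 1 - l3)]
      have h3 := hr3 i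
      have hs0 : (0:ℝ) ≤ s := Nat.cast_nonneg s
      have hp : (1-l3)^(s+1) = (1-l3) * (1-l3)^s := by ring
      have hgoal : ((s+1 : ℕ) : ℝ) = (s:ℝ) + 1 := by push_cast; ring
      rw [hgoal, hp]
      have hl3 : (0:ℝ) ≤ 1 - l3 := by linarith
      have hx1 : (1-l3) * |x s i - (∑ j, η j * x s j) * η i - (∑ j, ξ j * x s j) * ξ i|
          ≤ (1-l3) * ((1-l3)^s * cx + s * (2 * l1 * cx)) :=
        mul_le_mul_of_nonneg_left ih hl3
      rw [h1] at habs
      have h5 : (1-l3) * ((s:ℝ) * (2 * l1 * cx)) ≤ (s:ℝ) * (2 * l1 * cx) := by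
        nlinarith [mul_nonneg hs0 (by positivity : (0:ℝ) ≤ 2 * l1 * cx),
          mul_nonneg (mul_nonneg hs0 (by positivity : (0:ℝ) ≤ 2 * l1 * cx)) (by linarith : (0:ℝ) ≤ l3)]
      nlinarith [habs, hx1, h3, h5]
  -- put everything together
  have hdecomp : x t i - (2/(m:ℝ)) * ∑ j ∈ univ.filter
      (fun j : Fin m => (((j:ℕ) < m/2) ↔ ((i:ℕ) < m/2))), x 0 j
      = ((∑ j, η j * x t j) * η i - u) + ((∑ j, ξ j * x t j) * ξ i - v)
        + (x t i - (∑ j, η j * x t j) * η i - (∑ j, ξ j * x t j) * ξ i) := by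
    rw [← hplus]; ring
  rw [hdecomp]
  have habs := abs_add_three ((∑ j, η j * x t j) * η i - u) ((∑ j, ξ j * x t j) * ξ i - v)
    (x t i - (∑ j, η j * x t j) * η i - (∑ j, ξ j * x t j) * ξ i)
  have i1 := I1 t
  have i2 := I2 t
  have i3 := I3 t
  have ht0 : (0:ℝ) ≤ t := Nat.cast_nonneg t
  have hu0 : (0:ℝ) ≤ |u| := abs_nonneg u
  have hv0 : (0:ℝ) ≤ |v| := abs_nonneg v
  have hfin : (t:ℝ) * (l1 * |u| + l1 * cx) + (t:ℝ) * (l2 * |v| + l1 * cx)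
      + ((1-l3)^t * cx + (t:ℝ) * (2 * l1 * cx)) ≤ ((4*l1 + l2) * (t:ℝ) + (1 - l3)^t) * cx := by
    have hblend : l1 * |u| + l2 * |v| ≤ l2 * cx := by nlinarith [hu0, hv0]
    nlinarith [mul_le_mul_of_nonneg_left hblend ht0]
  linarith [habs, i1, i2, i3, hfin]
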